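/- Let C be a linear code of length n over a finite commutative principal ideal ring R, and define I = (I_0, …, I_t) by I_i = {j ∈ {0,…,t} : a_j a_k ≠ 0 for all k such that a_i a_k ≠ 0}. Let A be the (t+1)×(t+1) 0–1 matrix with A_{ij} = 1 iff a_iR ⊆ a_jR (equal to P^I). Then for every positive integer λ, sse^[λ]_C(A Y) = Σ_{Y' ⊆ t·[n]} (B^I_C(Y'))^λ · ∏_{i=0}^t ∏_{ℓ ∈ M_i(Y')} y_{iℓ}, as an identity of polynomials in the variables y_{iℓ}, where the sum runs over all submultisets Y' of t·[n]. -/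

import Mathlib

/-!
Substituting `A Y` column by column sends the monomial of `m` to the sum of the monomials of all
`m'` with `(a_{m ℓ}) ⊆ (a_{m' ℓ})` for every `ℓ`. Hence the coefficient of `m'` counts the
`λ`-tuples of codewords whose column ideals lie in `(a_{m' ℓ})`, that is, tuples of codewords with
`c_ℓ ∈ (a_{m' ℓ})`: the `λ`-th power of one such count. This count is `B^I_C(m')` because
`j ∈ I_i` says exactly `(a_i) ⊆ (a_j)`, by the double annihilator property `ann (ann x) = (x)` of
finite principal ideal rings.
-/

noncomputable section
open scoped BigOperators

/-- The dual of a linear code `C ⊆ Rⁿ` with respect to the standard inner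
product `u·v = ∑ ℓ, u ℓ * v ℓ`. -/
def dualCode {R : Type*} [CommRing R] {n : ℕ} (C : Submodule R (Fin n → R)) :
    Submodule R (Fin n → R) where
  carrier := {v | ∀ u ∈ C, ∑ ℓ, u ℓ * v ℓ = 0}
  add_mem' := by
    intro v w hv hw u hu
    simp only [Set.mem_setOf_eq] at *
    have h1 := hv u hu
    have h2 := hw u hu
    simp only [Pi.add_apply, mul_add, Finset.sum_add_distrib, h1, h2, add_zero]
  zero_mem' := by
    intro u hu
    simp
  smul_mem' := by
    intro c v hv u hu
    simp only [Set.mem_setOf_eq] at *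
    have h := hv u hu
    have : ∑ ℓ, u ℓ * (c • v) ℓ = c * ∑ ℓ, u ℓ * v ℓ := by
      rw [Finset.mul_sum]
      exact Finset.sum_congr rfl fun ℓ _ => by
        simp only [Pi.smul_apply, smul_eq_mul]; ring
    rw [this, h, mul_zero]

/-- A finite commutative ring is Frobenius iff `|C|·|C⊥| = |R|ⁿ` for every
linear code `C` of every length `n` over `R`. -/
def IsFrobeniusRing (R : Type*) [CommRing R] [Fintype R] : Prop :=
  ∀ (n : ℕ) (C : Submodule R (Fin n → R)),
    Nat.card C * Nat.card (dualCode C) = Fintype.card R ^ n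

open MvPolynomial Classical

/-- `A^[λ]_C(X)`: the number of `λ`-tuples `(c₁, …, c_λ) ∈ C^λ` such that
`S^[λ]_i(c₁, …, c_λ) = M_i(X)` for all `i`, where
`S^[λ]_i(c₁, …, c_λ) = {ℓ : c_{1ℓ}R + ⋯ + c_{λℓ}R = a_i R}` and the submultiset
`X ⊆ t·[n]` is identified with its multiplicity function `m`. -/
def AL {R : Type*} [CommRing R] {t n : ℕ} (a : Fin (t + 1) → R)
    (C : Submodule R (Fin n → R)) (lam : ℕ) (m : Fin n → Fin (t + 1)) : ℕ :=
  Nat.card {cs : Fin lam → C // ∀ (i : Fin (t + 1)) (ℓ : Fin n),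
    m ℓ = i ↔
      Ideal.span (Set.range fun k => (cs k : Fin n → R) ℓ) = Ideal.span {a i}}

/-- The `λ`-tuple symmetrized support enumerator
`sse^[λ]_C = ∑_{X ⊆ t·[n]} A^[λ]_C(X) ∏ᵢ ∏_{ℓ ∈ M_i(X)} x_{iℓ}`. -/
def sseL {R : Type*} [CommRing R] [Fintype R] {t n : ℕ} (a : Fin (t + 1) → R)
    (C : Submodule R (Fin n → R)) (lam : ℕ) :
    MvPolynomial (Fin (t + 1) × Fin n) ℚ :=
  ∑ m : Fin n → Fin (t + 1),
    MvPolynomial.C ((AL a C lam m : ℚ)) * ∏ ℓ : Fin n, X (m ℓ, ℓ)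

/-- For a tuple `F = (F₀, …, F_t)` of subsets of `{0, …, t}` and a submultiset
`X ⊆ t·[n]` (identified with its multiplicity function `m : [n] → {0, …, t}`),
`B^F_C(X) = |{c ∈ C : S_i(c) ⊆ ∪_{j ∈ F_i} M_j(X) for all i}|`. -/
def BF {R : Type*} [CommRing R] {t n : ℕ} (a : Fin (t + 1) → R)
    (C : Submodule R (Fin n → R)) (F : Fin (t + 1) → Set (Fin (t + 1)))
    (m : Fin n → Fin (t + 1)) : ℕ :=
  Nat.card {c : C // ∀ (i : Fin (t + 1)) (ℓ : Fin n),
    Ideal.span {(c : Fin n → R) ℓ} = Ideal.span {a i} → m ℓ ∈ F i}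


section Annihilator

variable {R : Type*} [CommRing R]

theorem card_annihilator_mul_card_span_singleton [Finite R] (x : R) :
    Nat.card (Ideal.span {x}).annihilator * Nat.card (Ideal.span {x}) = Nat.card R := by
  have hquot := Nat.card_congr (LinearMap.toSpanSingleton R R x).quotKerEquivRange.toEquiv
  rw [← LinearMap.span_singleton_eq_range] at hquot
  rw [Submodule.card_eq_card_quotient_mul_card (LinearMap.ker (LinearMap.toSpanSingleton R R x)),
    hquot, ← Submodule.annihilator_span_singleton]

theorem span_singleton_le_annihilator_annihilator (x : R) :
    Ideal.span {x} ≤ (Ideal.span {x}).annihilator.annihilator := by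
  rw [Ideal.span_le, Set.singleton_subset_iff, SetLike.mem_coe, Submodule.mem_annihilator]
  intro r hr
  rw [Submodule.mem_annihilator_span_singleton, smul_eq_mul] at hr
  rw [smul_eq_mul, mul_comm, hr]

/-- Writing `ann x = (z)`, `|ann z| · |(z)| = |R| = |ann x| · |(x)|`, so the inclusion
`(x) ⊆ ann z` is an equality. -/
theorem annihilator_annihilator_span_singleton [Finite R] [IsPrincipalIdealRing R] (x : R) :
    (Ideal.span {x}).annihilator.annihilator = Ideal.span {x} := by
  have hz := Ideal.span_singleton_generator (Ideal.span {x}).annihilator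
  set z := Submodule.IsPrincipal.generator (Ideal.span {x}).annihilator
  have hcard := (card_annihilator_mul_card_span_singleton z).trans
    (card_annihilator_mul_card_span_singleton x).symm
  rw [hz, mul_comm _ (Nat.card (Ideal.span {x}))] at hcard
  refine (Submodule.toAddSubgroup_injective <| AddSubgroup.eq_of_le_of_card_ge
    (span_singleton_le_annihilator_annihilator x) ?_).symm
  exact (Nat.eq_of_mul_eq_mul_right Nat.card_pos hcard).le

theorem span_singleton_le_span_singleton_iff_annihilator_le [Finite R] [IsPrincipalIdealRing R]
    {x y : R} :
    Ideal.span {x} ≤ Ideal.span {y} ↔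
      (Ideal.span {y}).annihilator ≤ (Ideal.span {x}).annihilator := by
  refine ⟨Submodule.annihilator_mono, fun h => ?_⟩
  simpa only [annihilator_annihilator_span_singleton] using Submodule.annihilator_mono h

theorem mul_eq_zero_iff_of_span_singleton_eq {r s : R} (h : Ideal.span {r} = Ideal.span {s})
    (y : R) : y * r = 0 ↔ y * s = 0 := by
  rw [← smul_eq_mul, ← Submodule.mem_annihilator_span_singleton, Ideal.submodule_span_eq, h,
    ← Ideal.submodule_span_eq, Submodule.mem_annihilator_span_singleton, smul_eq_mul]

theorem span_singleton_le_iff_forall_mul_ne_zero [Finite R] [IsPrincipalIdealRing R] {ι : Type*}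
    (a : ι → R) (hrep : ∀ r : R, ∃ i, Ideal.span {r} = Ideal.span {a i}) {x y : R} :
    Ideal.span {x} ≤ Ideal.span {y} ↔ ∀ k, x * a k ≠ 0 → y * a k ≠ 0 := by
  rw [span_singleton_le_span_singleton_iff_annihilator_le, SetLike.le_def]
  simp only [← Ideal.submodule_span_eq, Submodule.mem_annihilator_span_singleton, smul_eq_mul,
    not_imp_not]
  refine ⟨fun h k => by simpa only [mul_comm _ (a k)] using @h (a k), fun h r => ?_⟩
  obtain ⟨k, hk⟩ := hrep r
  simpa only [mul_comm r, mul_comm (a k), mul_eq_zero_iff_of_span_singleton_eq hk] using h k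

end Annihilator

theorem bind₁_sum_C_mul_prod_X {K ι σ : Type*} [CommSemiring K] [Fintype ι] [DecidableEq ι]
    [Fintype σ] [DecidableEq σ] (A : Matrix ι ι K) (f : (σ → ι) → K) :
    bind₁ (fun p : ι × σ => ∑ j, C (A p.1 j) * X (j, p.2)) (∑ m, C (f m) * ∏ ℓ, X (m ℓ, ℓ)) =
      ∑ m' : σ → ι, C (∑ m, f m * ∏ ℓ, A (m ℓ) (m' ℓ)) * ∏ ℓ, X (m' ℓ, ℓ) := by
  simp only [map_sum, map_mul, bind₁_C_right, map_prod, bind₁_X_right, Finset.prod_univ_sum,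
    Fintype.piFinset_univ, Finset.mul_sum, Finset.prod_mul_distrib, Finset.sum_mul]
  rw [Finset.sum_comm]
  simp only [mul_assoc]

theorem Nat.card_subtype_forall_fin_fun {α : Type*} (p : α → Prop) (lam : ℕ) :
    Nat.card {f : Fin lam → α // ∀ k, p (f k)} = Nat.card {x // p x} ^ lam := by
  rw [Nat.card_congr Equiv.subtypePiEquivPi, Nat.card_fun, Nat.card_fin]

theorem exists_span_eq_span_singleton {R ι : Type*} [CommRing R] [IsPrincipalIdealRing R]
    (a : ι → R) (hrep : ∀ r : R, ∃ i, Ideal.span {r} = Ideal.span {a i}) (s : Set R) :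
    ∃ i, Ideal.span s = Ideal.span {a i} := by
  obtain ⟨g, hg⟩ := (IsPrincipalIdealRing.principal (Ideal.span s)).principal
  obtain ⟨i, hi⟩ := hrep g
  exact ⟨i, hg.trans hi⟩

section Counting

open Finset

variable {R : Type*} [CommRing R] {t n : ℕ} (a : Fin (t + 1) → R) (C : Submodule R (Fin n → R))

theorem BF_eq_card (hrep : ∀ r : R, ∃ i, Ideal.span {r} = Ideal.span {a i})
    {I : Fin (t + 1) → Set (Fin (t + 1))}
    (hI : ∀ i j, j ∈ I i ↔ Ideal.span {a i} ≤ Ideal.span {a j}) (m : Fin n → Fin (t + 1)) :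
    BF a C I m = Nat.card {c : C // ∀ ℓ, (c : Fin n → R) ℓ ∈ Ideal.span {a (m ℓ)}} := by
  refine Nat.card_congr (Equiv.subtypeEquivRight fun c => ?_)
  simp only [hI]
  refine ⟨fun h ℓ => ?_, fun h i ℓ hi => ?_⟩
  · obtain ⟨i, hi⟩ := hrep ((c : Fin n → R) ℓ)
    exact h i ℓ hi (hi ▸ Ideal.mem_span_singleton_self _)
  · rw [← hi, Ideal.span_singleton_le_iff_mem]
    exact h ℓ

variable [Fintype R]

theorem AL_eq_card_filter (hinj : ∀ i j, Ideal.span {a i} = Ideal.span {a j} → i = j)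
    {lam : ℕ} {τ : (Fin lam → C) → Fin n → Fin (t + 1)}
    (hτ : ∀ cs ℓ, Ideal.span (Set.range fun k => (cs k : Fin n → R) ℓ) = Ideal.span {a (τ cs ℓ)})
    (m : Fin n → Fin (t + 1)) :
    AL a C lam m = #{cs | τ cs = m} := by
  rw [AL, Nat.card_eq_fintype_card, Fintype.card_subtype]
  congr 1
  refine filter_congr fun cs _ => ?_
  have hspan : ∀ ℓ i, Ideal.span {a (τ cs ℓ)} = Ideal.span {a i} ↔ τ cs ℓ = i :=
    fun ℓ i => ⟨hinj _ _, by rintro rfl; rfl⟩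
  simp only [hτ, hspan, funext_iff]
  exact ⟨fun h ℓ => (h (m ℓ) ℓ).1 rfl, fun h i ℓ => by rw [h ℓ]⟩

variable [IsPrincipalIdealRing R]

theorem sum_AL_filter_eq_card (hrep : ∀ r : R, ∃ i, Ideal.span {r} = Ideal.span {a i})
    (hinj : ∀ i j, Ideal.span {a i} = Ideal.span {a j} → i = j) (lam : ℕ)
    (J : Fin n → Ideal R) :
    ∑ m : Fin n → Fin (t + 1) with ∀ ℓ, Ideal.span {a (m ℓ)} ≤ J ℓ, AL a C lam m =
      Nat.card {cs : Fin lam → C // ∀ k ℓ, (cs k : Fin n → R) ℓ ∈ J ℓ} := by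
  choose τ hτ using fun (cs : Fin lam → C) ℓ =>
    exists_span_eq_span_singleton a hrep (Set.range fun k => (cs k : Fin n → R) ℓ)
  have hmem : ∀ cs : Fin lam → C,
      (∀ k ℓ, (cs k : Fin n → R) ℓ ∈ J ℓ) ↔ ∀ ℓ, Ideal.span {a (τ cs ℓ)} ≤ J ℓ := by
    intro cs
    simp only [← hτ, Ideal.span_le, Set.range_subset_iff]
    exact forall_comm
  simp only [AL_eq_card_filter a C hinj hτ, Nat.card_eq_fintype_card, Fintype.card_subtype, hmem]
  rw [card_eq_sum_card_fiberwise (f := τ) (t := {m | ∀ ℓ, Ideal.span {a (m ℓ)} ≤ J ℓ})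
    (fun cs hcs => by simpa using hcs)]
  refine sum_congr rfl fun m hm => ?_
  rw [filter_filter]
  refine congrArg card (filter_congr fun cs _ => ?_)
  rw [mem_filter_univ] at hm
  exact ⟨fun h => ⟨h ▸ hm, h⟩, And.right⟩

end Counting

theorem stmt15 {R : Type*} [CommRing R] [Fintype R] [IsPrincipalIdealRing R]
    {t : ℕ} (a : Fin (t + 1) → R)
    (hrep : ∀ r : R, ∃ i, Ideal.span {r} = Ideal.span {a i})
    (hinj : ∀ i j, Ideal.span {a i} = Ideal.span {a j} → i = j)
    {n : ℕ} (C : Submodule R (Fin n → R))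
    (I : Fin (t + 1) → Set (Fin (t + 1)))
    (hI : ∀ i, I i = {j | ∀ k, a i * a k ≠ 0 → a j * a k ≠ 0})
    (A : Matrix (Fin (t + 1)) (Fin (t + 1)) ℚ)
    (hA : ∀ i j, A i j = if Ideal.span {a i} ≤ Ideal.span {a j} then 1 else 0)
    (lam : ℕ) :
    (MvPolynomial.bind₁ (fun p : Fin (t + 1) × Fin n =>
        ∑ j : Fin (t + 1), MvPolynomial.C (A p.1 j) * X (j, p.2))) (sseL a C lam) =
      ∑ m : Fin n → Fin (t + 1),
        MvPolynomial.C ((BF a C I m : ℚ) ^ lam) * ∏ ℓ : Fin n, X (m ℓ, ℓ) := by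
  have hI_iff : ∀ i j, j ∈ I i ↔ Ideal.span {a i} ≤ Ideal.span {a j} := fun i j => by
    rw [hI]
    exact (span_singleton_le_iff_forall_mul_ne_zero a hrep).symm
  rw [sseL, bind₁_sum_C_mul_prod_X]
  refine Finset.sum_congr rfl fun m' _ => ?_
  simp only [hA, Fintype.prod_boole, mul_boole]
  rw [BF_eq_card a C hrep hI_iff, ← Nat.cast_pow, ← Nat.card_subtype_forall_fin_fun,
    ← sum_AL_filter_eq_card a C hrep hinj, Nat.cast_sum, Finset.sum_filter]
  -- the two sides differ only in their `Decidable` instances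
  congr!
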